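/- arXiv:0908.4387 — 6 statements merged into one kernel-verified Lean document; each statement's English description precedes it below -/
import Mathlib

section
/- Let a = p/q > 1 be rational, let A, B be nonnegative integers not both zero, let T = T^a_{A,B}, let k ≥ 1 be the number of lattice points on the slant edge of T (the segment where x + a·y = A + a·B, x ≥ 0, y ≥ 0), and let d be a positive integer such that #(T ∩ ℤ²) ≤ (d+1)(d+2)/2 + k − 1. Let (A₀,B₀) be the lattice point on the slant edge with smallest x-coordinate and (A₁,B₁) the lattice point on the slant edge with largest x-coordinate. Then there exists ε > 0 such that for every irrational z with a − ε < z < a one has k_{A₀,B₀}(z) ≥ (A₀ + z·B₀)/d, and for every irrational z with a < z < a + ε one has k_{A₁,B₁}(z) ≥ (A₁ + z·B₁)/d. -/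
/-!
For `z` close to `a` the triangle `T^z_{A₀,B₀}` is a small tilt of `T^a_{A,B}` about the lattice
point `(A₀,B₀)` of its slant edge. Only finitely many lattice points are candidates, and each one
outside `T^a_{A,B}` violates a strict inequality that survives a small perturbation of the slope,
so `T^z_{A₀,B₀} ∩ ℤ² ⊆ T^a_{A,B} ∩ ℤ²`. Tilting towards a smaller slope about the leftmost
lattice point of the slant edge cuts off the other `k - 1` lattice points of that edge, hence
`#(T^z_{A₀,B₀} ∩ ℤ²) ≤ #(T^a_{A,B} ∩ ℤ²) - (k - 1) ≤ (d+1)(d+2)/2`, i.e. `d^z_{A₀,B₀} ≤ d`.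
The case `z > a` with the rightmost point `(A₁,B₁)` is symmetric.
-/

/-- The number of lattice points in the triangle `T^a_{A,B} = {(x,y) : x ≥ 0, y ≥ 0, x + a·y ≤ A + a·B}`. -/
noncomputable def latticeCount (a : ℝ) (A B : ℕ) : ℕ :=
  Set.ncard {xy : ℤ × ℤ | 0 ≤ xy.1 ∧ 0 ≤ xy.2 ∧ (xy.1 : ℝ) + a * xy.2 ≤ (A : ℝ) + a * B}

/-- The smallest positive integer `d` such that `#(T^a_{A,B} ∩ ℤ²) ≤ (d+1)(d+2)/2`
(stated multiplied by 2 to avoid division). -/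
noncomputable def ddeg (a : ℝ) (A B : ℕ) : ℕ :=
  sInf {d : ℕ | 0 < d ∧ 2 * latticeCount a A B ≤ (d+1)*(d+2)}

/-- `k_{A,B}(a) := (A + a·B) / d^a_{A,B}`. -/
noncomputable def kABval (a : ℝ) (A B : ℕ) : ℝ := ((A : ℝ) + a * B) / (ddeg a A B)

/-- The number of lattice points on the slant edge `{x + a·y = A + a·B, x ≥ 0, y ≥ 0}`
of the triangle `T^a_{A,B}`. -/
noncomputable def slantCount (a : ℝ) (A B : ℕ) : ℕ :=
  Set.ncard {xy : ℤ × ℤ | 0 ≤ xy.1 ∧ 0 ≤ xy.2 ∧ (xy.1 : ℝ) + a * xy.2 = (A : ℝ) + a * B}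

open Filter Topology

-- `latticeCount a A B` and `slantCount a A B` are by definition the `ncard`s of these sets
-- with `c = A + a * B`.
def latticeTriangle (a c : ℝ) : Set (ℤ × ℤ) :=
  {xy | 0 ≤ xy.1 ∧ 0 ≤ xy.2 ∧ (xy.1 : ℝ) + a * xy.2 ≤ c}

def slantEdge (a c : ℝ) : Set (ℤ × ℤ) :=
  {xy | 0 ≤ xy.1 ∧ 0 ≤ xy.2 ∧ (xy.1 : ℝ) + a * xy.2 = c}

lemma slantEdge_subset_latticeTriangle (a c : ℝ) : slantEdge a c ⊆ latticeTriangle a c :=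
  fun _ ⟨hx, hy, h⟩ => ⟨hx, hy, h.le⟩

lemma latticeTriangle_mono {a a' c c' : ℝ} (ha : a ≤ a') (hc : c' ≤ c) :
    latticeTriangle a' c' ⊆ latticeTriangle a c := by
  rintro ⟨x, y⟩ ⟨hx, hy, h⟩
  have hy' : (0 : ℝ) ≤ y := by exact_mod_cast hy
  exact ⟨hx, hy, by nlinarith⟩

lemma latticeTriangle_finite {a : ℝ} (ha : 0 < a) (c : ℝ) : (latticeTriangle a c).Finite := by
  refine ((Set.finite_Icc 0 ⌈c⌉).prod (Set.finite_Icc 0 ⌈c / a⌉)).subset ?_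
  rintro ⟨x, y⟩ ⟨hx, hy, h⟩
  have hx' : (0 : ℝ) ≤ x := by exact_mod_cast hx
  have hy' : (0 : ℝ) ≤ y := by exact_mod_cast hy
  have hxc : (x : ℝ) ≤ c := by nlinarith
  have hyc : (y : ℝ) ≤ c / a := by rw [le_div_iff₀ ha]; linarith
  exact ⟨⟨hx, by exact_mod_cast hxc.trans (Int.le_ceil c)⟩,
    ⟨hy, by exact_mod_cast hyc.trans (Int.le_ceil (c / a))⟩⟩

lemma eventually_latticeTriangle_subset {a : ℝ} (ha : 0 < a) (u v : ℝ) :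
    ∀ᶠ z in 𝓝 a, latticeTriangle z (u + z * v) ⊆ latticeTriangle a (u + a * v) := by
  set K := latticeTriangle (a / 2) (u + a * v + 1)
  have hcont : Continuous fun z : ℝ => u + z * v := by fun_prop
  have hK : ∀ᶠ z in 𝓝 a, latticeTriangle z (u + z * v) ⊆ K :=
    ((eventually_gt_nhds (half_lt_self ha)).and
      (hcont.continuousAt.eventually_lt continuousAt_const (lt_add_one _))).mono
      fun z hz => latticeTriangle_mono hz.1.le hz.2.le
  have hpoint : ∀ Q ∈ K, ∀ᶠ z in 𝓝 a,
      Q ∈ latticeTriangle z (u + z * v) → Q ∈ latticeTriangle a (u + a * v) := by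
    rintro ⟨x, y⟩ ⟨hx, hy, -⟩
    by_cases hQ : ((x, y) : ℤ × ℤ) ∈ latticeTriangle a (u + a * v)
    · exact Eventually.of_forall fun _ _ => hQ
    · have hgt : u + a * v < x + a * y := lt_of_not_ge fun h => hQ ⟨hx, hy, h⟩
      have hQcont : Continuous fun z : ℝ => (x : ℝ) + z * y := by fun_prop
      filter_upwards [hcont.continuousAt.eventually_lt hQcont.continuousAt hgt] with z hz hQz
      exact absurd hQz.2.2 (not_le.2 hz)
  filter_upwards [hK, (Set.Finite.eventually_all (latticeTriangle_finite (half_pos ha) _)).2 hpoint]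
    with z hzK hz Q hQ using hz Q (hzK hQ) hQ

lemma slantEdge_inter_latticeTriangle_subset_of_lt {a z c : ℝ} (ha : 0 < a) (hz : z < a)
    {A₀ B₀ : ℕ} (hP : (A₀ : ℝ) + a * B₀ = c) (hmin : ∀ x y : ℕ, (x : ℝ) + a * y = c → A₀ ≤ x) :
    slantEdge a c ∩ latticeTriangle z (A₀ + z * B₀) ⊆ {((A₀ : ℤ), (B₀ : ℤ))} := by
  rintro ⟨x, y⟩ ⟨⟨hx, hy, hedge⟩, -, -, hle⟩
  lift x to ℕ using hx
  lift y to ℕ using hy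
  push_cast at hedge hle
  have hAx : (A₀ : ℝ) ≤ x := by exact_mod_cast hmin x y hedge
  have hyB : (y : ℝ) ≤ B₀ := by nlinarith
  have hBy : (B₀ : ℝ) ≤ y := by nlinarith
  have hy : y = B₀ := by exact_mod_cast le_antisymm hyB hBy
  have hx : x = A₀ := by subst hy; exact_mod_cast (by linarith : (x : ℝ) = A₀)
  simp [hx, hy]

lemma slantEdge_inter_latticeTriangle_subset_of_gt {a z c : ℝ} (ha : 0 < a) (hz : a < z)
    {A₁ B₁ : ℕ} (hP : (A₁ : ℝ) + a * B₁ = c) (hmax : ∀ x y : ℕ, (x : ℝ) + a * y = c → x ≤ A₁) :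
    slantEdge a c ∩ latticeTriangle z (A₁ + z * B₁) ⊆ {((A₁ : ℤ), (B₁ : ℤ))} := by
  rintro ⟨x, y⟩ ⟨⟨hx, hy, hedge⟩, -, -, hle⟩
  lift x to ℕ using hx
  lift y to ℕ using hy
  push_cast at hedge hle
  have hxA : (x : ℝ) ≤ A₁ := by exact_mod_cast hmax x y hedge
  have hBy : (B₁ : ℝ) ≤ y := by nlinarith
  have hyB : (y : ℝ) ≤ B₁ := by nlinarith
  have hy : y = B₁ := by exact_mod_cast le_antisymm hyB hBy
  have hx : x = A₁ := by subst hy; exact_mod_cast (by linarith : (x : ℝ) = A₁)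
  simp [hx, hy]

lemma ncard_add_pred_ncard_le {α : Type*} {s t u : Set α} {P : α} (ht : t.Finite)
    (hs : s ⊆ t) (hu : u ⊆ t) (hus : u ∩ s ⊆ {P}) : s.ncard + (u.ncard - 1) ≤ t.ncard := by
  have hu' : u \ {P} ⊆ t := Set.sdiff_subset.trans hu
  have hdisj : Disjoint s (u \ {P}) :=
    Set.disjoint_left.2 fun _ hQs hQu => hQu.2 (hus ⟨hQu.1, hQs⟩)
  calc s.ncard + (u.ncard - 1) ≤ s.ncard + (u \ {P}).ncard :=
        Nat.add_le_add_left (Set.pred_ncard_le_ncard_sdiff_singleton _ _) _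
    _ = (s ∪ (u \ {P})).ncard := (Set.ncard_union_eq hdisj (ht.subset hs) (ht.subset hu')).symm
    _ ≤ t.ncard := Set.ncard_le_ncard (Set.union_subset hs hu') ht

lemma div_le_kABval {a : ℝ} {A B d : ℕ} (hd : 0 < d)
    (hcount : 2 * latticeCount a A B ≤ (d + 1) * (d + 2)) (hnum : 0 ≤ (A : ℝ) + a * B) :
    ((A : ℝ) + a * B) / d ≤ kABval a A B := by
  have hmem : d ∈ {d : ℕ | 0 < d ∧ 2 * latticeCount a A B ≤ (d + 1) * (d + 2)} := ⟨hd, hcount⟩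
  have hpos : 0 < ddeg a A B := (Nat.sInf_mem ⟨d, hmem⟩).1
  exact div_le_div_of_nonneg_left hnum (by exact_mod_cast hpos) (by exact_mod_cast Nat.sInf_le hmem)

lemma div_le_kABval_of_tilt {a z : ℝ} (ha : 0 < a) (hz : 0 < z) {A B A' B' d : ℕ} (hd : 0 < d)
    (hcount : 2 * latticeCount a A B ≤ (d + 1) * (d + 2) + 2 * (slantCount a A B - 1))
    (hsub : latticeTriangle z (A' + z * B') ⊆ latticeTriangle a (A + a * B))
    (hedge : slantEdge a (A + a * B) ∩ latticeTriangle z (A' + z * B') ⊆ {((A' : ℤ), (B' : ℤ))}) :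
    ((A' : ℝ) + z * B') / d ≤ kABval z A' B' := by
  have hle : latticeCount z A' B' + (slantCount a A B - 1) ≤ latticeCount a A B :=
    ncard_add_pred_ncard_le (latticeTriangle_finite ha _) hsub
      (slantEdge_subset_latticeTriangle _ _) hedge
  exact div_le_kABval hd (by omega) (by positivity)

theorem ech_lemma_one_general (p q A B : ℕ) (hq : 0 < q) (hpq : q < p)
    (k d : ℕ) (hk : k = slantCount ((p : ℝ)/q) A B) (hd : 0 < d)
    (hcount : 2 * latticeCount ((p : ℝ)/q) A B ≤ (d+1)*(d+2) + 2*(k-1))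
    (A₀ B₀ A₁ B₁ : ℕ)
    (h₀ : (A₀ : ℝ) + ((p : ℝ)/q) * B₀ = (A : ℝ) + ((p : ℝ)/q) * B)
    (h₀min : ∀ x y : ℕ, (x : ℝ) + ((p : ℝ)/q) * y = (A : ℝ) + ((p : ℝ)/q) * B → A₀ ≤ x)
    (h₁ : (A₁ : ℝ) + ((p : ℝ)/q) * B₁ = (A : ℝ) + ((p : ℝ)/q) * B)
    (h₁max : ∀ x y : ℕ, (x : ℝ) + ((p : ℝ)/q) * y = (A : ℝ) + ((p : ℝ)/q) * B → x ≤ A₁) :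
    ∃ ε > (0 : ℝ),
      (∀ z : ℝ, Irrational z → (p : ℝ)/q - ε < z → z < (p : ℝ)/q →
        ((A₀ : ℝ) + z * B₀) / d ≤ kABval z A₀ B₀) ∧
      (∀ z : ℝ, Irrational z → (p : ℝ)/q < z → z < (p : ℝ)/q + ε →
        ((A₁ : ℝ) + z * B₁) / d ≤ kABval z A₁ B₁) := by
  set a : ℝ := (p : ℝ) / q
  subst hk
  have ha : 0 < a := div_pos (by exact_mod_cast hq.trans hpq) (by exact_mod_cast hq)
  obtain ⟨ε, hε, hnear⟩ := Metric.eventually_nhds_iff.1 <| (eventually_gt_nhds ha).and <|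
    (eventually_latticeTriangle_subset ha A₀ B₀).and (eventually_latticeTriangle_subset ha A₁ B₁)
  have hclose : ∀ z, a - ε < z → z < a + ε → dist z a < ε := fun z h₁ h₂ => by
    rw [Real.dist_eq, abs_sub_lt_iff]; constructor <;> linarith
  refine ⟨ε, hε, fun z _ hlo hhi => ?_, fun z _ hlo hhi => ?_⟩
  · obtain ⟨hz, hsub, -⟩ := hnear (hclose z hlo (by linarith))
    exact div_le_kABval_of_tilt ha hz hd hcount (h₀ ▸ hsub)
      (slantEdge_inter_latticeTriangle_subset_of_lt ha hhi h₀ h₀min)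
  · obtain ⟨hz, -, hsub⟩ := hnear (hclose z (by linarith) hhi)
    exact div_le_kABval_of_tilt ha hz hd hcount (h₁ ▸ hsub)
      (slantEdge_inter_latticeTriangle_subset_of_gt ha hlo h₁ h₁max)

/-- Lemma `le:ECH1`: for rational `a = p/q > 1`, if the lattice count of
`T^a_{A,B}` is at most `(d+1)(d+2)/2 + k − 1` where `k ≥ 1` is the number of lattice points
on the slant edge, and `(A₀,B₀)` (resp. `(A₁,B₁)`) is the lattice point on the slant edge of
smallest (resp. largest) `x`-coordinate, then there is `ε > 0` such that
`k_{A₀,B₀}(z) ≥ (A₀ + z·B₀)/d` for irrational `z ∈ (a−ε, a)` and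
`k_{A₁,B₁}(z) ≥ (A₁ + z·B₁)/d` for irrational `z ∈ (a, a+ε)`. -/
theorem ech_lemma_one (p q A B : ℕ) (hq : 0 < q) (hpq : q < p) (hAB : ¬ (A = 0 ∧ B = 0))
    (k d : ℕ) (hk1 : 1 ≤ k) (hk : k = slantCount ((p : ℝ)/q) A B) (hd : 0 < d)
    (hcount : 2 * latticeCount ((p : ℝ)/q) A B ≤ (d+1)*(d+2) + 2*(k-1))
    (A₀ B₀ A₁ B₁ : ℕ)
    (h₀ : (A₀ : ℝ) + ((p : ℝ)/q) * B₀ = (A : ℝ) + ((p : ℝ)/q) * B)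
    (h₀min : ∀ x y : ℕ, (x : ℝ) + ((p : ℝ)/q) * y = (A : ℝ) + ((p : ℝ)/q) * B → A₀ ≤ x)
    (h₁ : (A₁ : ℝ) + ((p : ℝ)/q) * B₁ = (A : ℝ) + ((p : ℝ)/q) * B)
    (h₁max : ∀ x y : ℕ, (x : ℝ) + ((p : ℝ)/q) * y = (A : ℝ) + ((p : ℝ)/q) * B → x ≤ A₁) :
    ∃ ε > (0 : ℝ),
      (∀ z : ℝ, Irrational z → (p : ℝ)/q - ε < z → z < (p : ℝ)/q →
        ((A₀ : ℝ) + z * B₀) / d ≤ kABval z A₀ B₀) ∧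
      (∀ z : ℝ, Irrational z → (p : ℝ)/q < z → z < (p : ℝ)/q + ε →
        ((A₁ : ℝ) + z * B₁) / d ≤ kABval z A₁ B₁) :=
  ech_lemma_one_general p q A B hq hpq k d hk hd hcount A₀ B₀ A₁ B₁ h₀ h₀min h₁ h₁max
end

section
/- For every irrational a > 1 and every ε > 0 there exists a positive integer s such that k_{s,0}(a) ≥ √a − ε; that is, the embedded-contact-homology lower bound satisfies c_{ECH}(a) ≥ √a. -/
open Finset Filter Topology

lemma sum_range_sub_mul_le {a : ℝ} (ha : 0 < a) (b : ℝ) (t : ℕ) :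
    ∑ j ∈ range t, (b - a * j) ≤ (b + a / 2) ^ 2 / (2 * a) := by
  have hsum : ∑ j ∈ range t, (b - a * j) = t * b - a * (t * (t - 1) / 2) := by
    induction t with
    | zero => simp
    | succ t ih => rw [sum_range_succ, ih]; push_cast; ring
  rw [hsum, le_div_iff₀ (by positivity)]
  nlinarith [sq_nonneg (b + a / 2 - a * t)]

lemma ncard_triangle_le {a c : ℝ} (ha : 0 < a) (hc : 0 ≤ c) :
    ({p : ℕ × ℕ | (p.1 : ℝ) + a * p.2 ≤ c}.ncard : ℝ) ≤
      (c + 1 + a / 2) ^ 2 / (2 * a) := by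
  set m := ⌊c / a⌋₊
  have hrow : ∀ j ∈ range (m + 1), a * j ≤ c := fun j hj => by
    have : (j : ℝ) ≤ c / a :=
      (Nat.cast_le.2 (Nat.lt_succ_iff.1 (mem_range.1 hj))).trans (Nat.floor_le (by positivity))
    rwa [le_div_iff₀ ha, mul_comm] at this
  have hsub : {p : ℕ × ℕ | (p.1 : ℝ) + a * p.2 ≤ c} ⊆
      ↑((range (m + 1)).biUnion fun j => range (⌊c - a * j⌋₊ + 1) ×ˢ {j}) := by
    rintro ⟨x, y⟩ (hxy : (x : ℝ) + a * y ≤ c)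
    have hx : (x : ℝ) ≤ c - a * y := by linarith
    have hy : (y : ℝ) ≤ c / a := by
      rw [le_div_iff₀ ha]; nlinarith [(x.cast_nonneg : (0 : ℝ) ≤ x)]
    simp only [coe_biUnion, coe_range, Set.mem_iUnion, Set.mem_Iio, coe_product, coe_singleton,
      Set.mem_prod, Set.mem_singleton_iff]
    exact ⟨y, Nat.lt_succ_of_le (Nat.le_floor hy), Nat.lt_succ_of_le (Nat.le_floor hx), rfl⟩
  calc ({p : ℕ × ℕ | (p.1 : ℝ) + a * p.2 ≤ c}.ncard : ℝ)
      ≤ ∑ j ∈ range (m + 1), ((⌊c - a * j⌋₊ + 1 : ℕ) : ℝ) := by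
        rw [← Nat.cast_sum]
        refine Nat.cast_le.2 ((Set.ncard_le_ncard hsub (finite_toSet _)).trans ?_)
        rw [Set.ncard_coe_finset]
        refine card_biUnion_le.trans (sum_le_sum fun j _ => ?_)
        simp
    _ ≤ ∑ j ∈ range (m + 1), (c + 1 - a * j) := by
        refine sum_le_sum fun j hj => ?_
        push_cast
        linarith [Nat.floor_le (sub_nonneg.2 (hrow j hj))]
    _ ≤ (c + 1 + a / 2) ^ 2 / (2 * a) := sum_range_sub_mul_le ha _ _

lemma latticeCount_eq_ncard (a : ℝ) (A B : ℕ) :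
    latticeCount a A B = {p : ℕ × ℕ | (p.1 : ℝ) + a * p.2 ≤ A + a * B}.ncard := by
  have hinj : Function.Injective (Prod.map ((↑) : ℕ → ℤ) ((↑) : ℕ → ℤ)) :=
    Nat.cast_injective.prodMap Nat.cast_injective
  rw [latticeCount, ← Set.ncard_image_of_injective _ hinj]
  congr 1
  ext ⟨x, y⟩
  constructor
  · rintro ⟨hx, hy, hxy⟩
    lift x to ℕ using hx
    lift y to ℕ using hy
    exact ⟨(x, y), by simpa using hxy, rfl⟩
  · rintro ⟨⟨x, y⟩, hxy, h⟩
    simp only [Prod.map, Prod.mk.injEq] at h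
    obtain ⟨rfl, rfl⟩ := h
    exact ⟨by positivity, by positivity, by simpa using hxy⟩

lemma ddeg_pos (a : ℝ) (A B : ℕ) : 0 < ddeg a A B := by
  set N := latticeCount a A B
  have hN : N + 1 ∈ {d : ℕ | 0 < d ∧ 2 * N ≤ (d + 1) * (d + 2)} :=
    ⟨N.succ_pos, by nlinarith⟩
  exact (Nat.sInf_mem ⟨_, hN⟩).1

lemma ddeg_le {a : ℝ} {A B d : ℕ} (hd : 0 < d)
    (h : 2 * latticeCount a A B ≤ (d + 1) * (d + 2)) :
    ddeg a A B ≤ d :=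
  Nat.sInf_le ⟨hd, h⟩

lemma ddeg_zero_le {a : ℝ} (ha : 0 < a) (s : ℕ) :
    (ddeg a s 0 : ℝ) ≤ (s + 1 + a / 2 + √a) / √a := by
  have hq : 0 < √a := Real.sqrt_pos.2 ha
  set x := (s + 1 + a / 2) / √a
  set d := ⌈x⌉₊
  have hx : 0 < x := by positivity
  have hxd : x ≤ d := Nat.le_ceil x
  have hcount : 2 * (latticeCount a s 0 : ℝ) ≤ x ^ 2 := by
    rw [latticeCount_eq_ncard, Nat.cast_zero, mul_zero, add_zero]
    calc _ ≤ 2 * ((s + 1 + a / 2) ^ 2 / (2 * a)) := by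
          gcongr; exact ncard_triangle_le ha s.cast_nonneg
      _ = x ^ 2 := by rw [div_pow, Real.sq_sqrt ha.le]; field_simp
  have hdeg : ddeg a s 0 ≤ d := by
    refine ddeg_le (Nat.ceil_pos.2 hx) ?_
    have : 2 * (latticeCount a s 0 : ℝ) ≤ ((d : ℝ) + 1) * (d + 2) := by nlinarith
    exact_mod_cast this
  calc (ddeg a s 0 : ℝ) ≤ d := by exact_mod_cast hdeg
    _ ≤ x + 1 := (Nat.ceil_lt_add_one hx.le).le
    _ = (s + 1 + a / 2 + √a) / √a := div_add_one hq.ne'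

lemma sqrt_mul_div_le_kABval {a : ℝ} (ha : 0 < a) (s : ℕ) :
    √a * (s / (s + (1 + a / 2 + √a))) ≤ kABval a s 0 := by
  have hq : 0 < √a := Real.sqrt_pos.2 ha
  have hdeg : (0 : ℝ) < ddeg a s 0 := by exact_mod_cast ddeg_pos a s 0
  calc √a * (s / (s + (1 + a / 2 + √a))) = s / ((s + 1 + a / 2 + √a) / √a) := by
        field_simp; ring
    _ ≤ s / ddeg a s 0 := div_le_div_of_nonneg_left s.cast_nonneg hdeg (ddeg_zero_le ha s)
    _ = kABval a s 0 := by simp [kABval]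

theorem ech_volume_bound_general (a : ℝ) (h1 : 1 < a)
    (ε : ℝ) (hε : 0 < ε) :
    ∃ s : ℕ, 0 < s ∧ Real.sqrt a - ε ≤ kABval a s 0 := by
  have ha : 0 < a := by linarith
  have hlim : Tendsto (fun s : ℕ => √a * (s / (s + (1 + a / 2 + √a)))) atTop (𝓝 √a) := by
    simpa using (tendsto_natCast_div_add_atTop (1 + a / 2 + √a)).const_mul √a
  obtain ⟨s, hs, hk⟩ :=
    ((eventually_gt_atTop 0).and (hlim.eventually_const_lt (sub_lt_self _ hε))).exists
  exact ⟨s, hs, hk.le.trans (sqrt_mul_div_le_kABval ha s)⟩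

/-- Lemma `le:0`: for every irrational `a > 1` and every `ε > 0` there is a
positive integer `s` with `k_{s,0}(a) ≥ √a − ε`; that is, `c_ECH(a) ≥ √a`. -/
theorem ech_volume_bound (a : ℝ) (ha : Irrational a) (h1 : 1 < a)
    (ε : ℝ) (hε : 0 < ε) :
    ∃ s : ℕ, 0 < s ∧ Real.sqrt a - ε ≤ kABval a s 0 :=
  ech_volume_bound_general a h1 ε hε
end

section
/- For every n ≥ 1, the tuple (d; m₁, …, m_M) := (g_{n+1}; W(g_{n+2}, g_n)) satisfies the two Diophantine conditions d² + 1 = Σ_{i} m_i² and 3d − 1 = Σ_{i} m_i. -/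
/-- The odd-indexed Fibonacci numbers: `g n = fib (2n-1)` for `n ≥ 1`, with `g 0 = 1`. -/
def g : ℕ → ℕ
  | 0 => 1
  | (n+1) => Nat.fib (2*n+1)

/-- The label sequence `W(p,q)`, defined by the Euclidean recursion: if `q ∣ p` then `q`
repeated `p/q` times; otherwise `q` repeated `⌊p/q⌋` times followed by `W q (p % q)`. -/
def W (p q : ℕ) : List ℕ :=
  if hq : q = 0 then []
  else if p % q = 0 then List.replicate (p / q) q
  else List.replicate (p / q) q ++ W q (p % q)
termination_by q
decreasing_by exact Nat.mod_lt _ (Nat.pos_of_ne_zero hq)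

/-!
Along the Euclidean algorithm, `W p q` tiles the `p × q` rectangle by squares, so
`Σ mᵢ² = p q` and `Σ mᵢ = p + q - gcd p q`. For consecutive odd-indexed Fibonacci numbers
the recurrence `g (n+2) + g n = 3 g (n+1)` and the Cassini-type identity
`g (n+1)² + 1 = g (n+2) g n` turn these into the two Diophantine conditions, the pair
`(g (n+2), g n)` being coprime.
-/

theorem W_map_sq_sum (p q : ℕ) : ((W p q).map (· ^ 2)).sum = p * q := by
  induction p, q using W.induct with
  | case1 p => simp [W]
  | case2 p q hq hpq =>
    rw [W, dif_neg hq, if_pos hpq, List.map_replicate, List.sum_replicate, smul_eq_mul, sq,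
      ← mul_assoc, Nat.div_mul_cancel (Nat.dvd_of_mod_eq_zero hpq)]
  | case3 p q hq hpq ih =>
    rw [W, dif_neg hq, if_neg hpq, List.map_append, List.sum_append, List.map_replicate,
      List.sum_replicate, smul_eq_mul, ih]
    calc p / q * q ^ 2 + q * (p % q) = (q * (p / q) + p % q) * q := by ring
      _ = p * q := by rw [Nat.div_add_mod]

theorem W_sum (p q : ℕ) : (W p q).sum = p + q - Nat.gcd p q := by
  induction p, q using W.induct with
  | case1 p => simp [W]
  | case2 p q hq hpq =>
    have hdvd := Nat.dvd_of_mod_eq_zero hpq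
    rw [W, dif_neg hq, if_pos hpq, List.sum_replicate, smul_eq_mul, Nat.div_mul_cancel hdvd,
      Nat.gcd_eq_right hdvd, Nat.add_sub_cancel]
  | case3 p q hq hpq ih =>
    rw [W, dif_neg hq, if_neg hpq, List.sum_append, List.sum_replicate, smul_eq_mul, ih,
      Nat.gcd_comm q, ← Nat.gcd_rec, Nat.gcd_comm q]
    have hgcd_le : Nat.gcd p q ≤ q := Nat.gcd_le_right p (Nat.pos_of_ne_zero hq)
    have hdiv := Nat.div_add_mod p q
    rw [mul_comm]
    omega

theorem Nat.fib_add_four_add_fib (k : ℕ) : fib (k + 4) + fib k = 3 * fib (k + 2) := by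
  simp only [fib_add_two]
  ring

theorem g_add_two_add_g (n : ℕ) : g (n + 2) + g n = 3 * g (n + 1) := by
  cases n with
  | zero => rfl
  | succ m => exact Nat.fib_add_four_add_fib (2 * m + 1)

theorem g_add_one_sq_add_one (n : ℕ) : g (n + 1) ^ 2 + 1 = g (n + 2) * g n := by
  induction n with
  | zero => rfl
  | succ n ih =>
    -- `g (n+2) g n - g (n+1)²` is invariant under the recurrence `x ↦ 3 y - x`.
    linear_combination ih + g (n + 2) * g_add_two_add_g n - g (n + 1) * g_add_two_add_g (n + 1)

theorem g_add_two_coprime (n : ℕ) : Nat.Coprime (g (n + 2)) (g n) := by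
  cases n with
  | zero => exact Nat.coprime_one_right _
  | succ m =>
    have hodd : Nat.Coprime 4 (2 * m + 1) :=
      (Nat.coprime_two_left.mpr (odd_two_mul_add_one m)).pow_left 2
    have hind : Nat.Coprime (2 * m + 1 + 4) (2 * m + 1) := by
      rw [add_comm]
      exact Nat.coprime_add_self_left.mpr hodd
    change Nat.Coprime (Nat.fib (2 * m + 1 + 4)) (Nat.fib (2 * m + 1))
    rw [Nat.Coprime, ← Nat.fib_gcd, hind, Nat.fib_one]

theorem Ebn_diophantine_general (n : ℕ) :
    (g (n+1))^2 + 1 = ((W (g (n+2)) (g n)).map (fun m => m^2)).sum ∧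
    3 * g (n+1) - 1 = (W (g (n+2)) (g n)).sum := by
  constructor
  · rw [W_map_sq_sum, g_add_one_sq_add_one]
  · rw [W_sum, (g_add_two_coprime n).gcd_eq_one, g_add_two_add_g]

/-- the tuple `E(b_n) = (g_{n+1}; W(g_{n+2}, g_n))` satisfies the Diophantine
conditions `d² + 1 = Σ mᵢ²` and `3d − 1 = Σ mᵢ`. -/
theorem Ebn_diophantine (n : ℕ) (hn : 1 ≤ n) :
    (g (n+1))^2 + 1 = ((W (g (n+2)) (g n)).map (fun m => m^2)).sum ∧
    3 * g (n+1) - 1 = (W (g (n+2)) (g n)).sum :=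
  Ebn_diophantine_general n
end

section
/- For every n ≥ 0, the rational numbers a_n := (g_{n+1}/g_n)² and b_n := g_{n+2}/g_n satisfy a_n < b_n < a_{n+1}. -/
/-!
Extending the Fibonacci numbers to negative indices gives `fib (-1) = 1`, so `g n = fib (2n - 1)`
for every `n`, and Catalan's identity with step `2` yields `g n * g (n+2) = g (n+1)^2 + 1`.
Both inequalities then say `g (n+1)^2 < g n * g (n+2)` after clearing the positive denominators.
-/

section RatioSquares

variable {K : Type*} [Field K] [LinearOrder K] [IsStrictOrderedRing K] {x y z : K}

lemma div_sq_lt_div_of_sq_lt_mul (hx : 0 < x) (h : y ^ 2 < x * z) : (y / x) ^ 2 < z / x := by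
  rw [div_pow, div_lt_div_iff₀ (by positivity) hx]
  nlinarith

lemma div_lt_div_sq_of_sq_lt_mul (hx : 0 < x) (hy : y ≠ 0) (hz : 0 < z) (h : y ^ 2 < x * z) :
    z / x < (z / y) ^ 2 := by
  rw [div_pow, div_lt_div_iff₀ hx (by positivity)]
  nlinarith

end RatioSquares

lemma g_pos : ∀ n, 0 < g n
  | 0 => Nat.one_pos
  | n + 1 => Nat.fib_pos.2 (by omega)

lemma g_eq_intFib (n : ℕ) : (g n : ℤ) = Int.fib (2 * n - 1) := by
  cases n with
  | zero => rfl
  | succ n =>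
    rw [g, ← Int.fib_natCast]
    congr 1
    push_cast
    ring

lemma g_mul_g_add_two (n : ℕ) : g n * g (n + 2) = g (n + 1) ^ 2 + 1 := by
  zify
  have catalan := Int.fib_add_sq_sub_fib_mul_fib_add_two_mul (2 * n - 1) 2
  have hodd : Odd (2 * (n : ℤ) - 1).natAbs := Int.natAbs_odd.2 ⟨n - 1, by ring⟩
  rw [hodd.neg_one_pow, Int.fib_two, show 2 * (n : ℤ) - 1 + 2 = 2 * (n + 1) - 1 by ring,
    show 2 * (n : ℤ) - 1 + 2 * 2 = 2 * (n + 2) - 1 by ring] at catalan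
  simp only [g_eq_intFib]
  push_cast
  linear_combination -catalan

/-- with `a_n := (g_{n+1}/g_n)²` and `b_n := g_{n+2}/g_n`, for every `n ≥ 0`
one has `a_n < b_n < a_{n+1}`. -/
theorem an_lt_bn_lt_a_succ (n : ℕ) :
    ((g (n+1) : ℝ)/(g n))^2 < (g (n+2) : ℝ)/(g n) ∧
    (g (n+2) : ℝ)/(g n) < ((g (n+2) : ℝ)/(g (n+1)))^2 := by
  have hpos : ∀ m, (0 : ℝ) < g m := fun m => by exact_mod_cast g_pos m
  have hsq_lt_mul : (g (n+1) : ℝ) ^ 2 < g n * g (n+2) := by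
    exact_mod_cast (g_mul_g_add_two n ▸ Nat.lt_succ_self _ : g (n+1) ^ 2 < g n * g (n+2))
  exact ⟨div_sq_lt_div_of_sq_lt_mul (hpos n) hsq_lt_mul,
    div_lt_div_sq_of_sq_lt_mul (hpos n) (hpos (n+1)).ne' (hpos (n+2)) hsq_lt_mul⟩
end

section
/- For all positive integers p ≥ q ≥ 1, the sum of the squares of the entries of the label sequence W(p,q) equals p·q. Equivalently, for a = p/q ≥ 1 in lowest terms, the weight expansion w(a) = (1/q)·W(p,q) satisfies Σ_i w_i² = a. -/
/-! The Euclidean algorithm cuts a `p × q` rectangle into `⌊p/q⌋` squares of side `q` and a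
`q × (p mod q)` rectangle, and recursion tiles that one as well; `W p q` lists the sides of all
the squares, so their areas add up to `p * q`. -/

theorem W_zero_right (p : ℕ) : W p 0 = [] := by
  rw [W, dif_pos rfl]

/-- The divisible case of the recursion is the general one, since `W q 0 = []`. -/
theorem W_eq_replicate_append {p q : ℕ} (hq : q ≠ 0) :
    W p q = List.replicate (p / q) q ++ W q (p % q) := by
  rw [W, dif_neg hq]
  split_ifs with hr
  · rw [hr, W_zero_right, List.append_nil]
  · rfl

theorem weight_expansion_sum_sq_general (p q : ℕ) :
    ((W p q).map (fun m => m^2)).sum = p * q := by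
  induction q using Nat.strong_induction_on generalizing p with
  | _ q ih =>
    rcases Nat.eq_zero_or_pos q with rfl | hq
    · simp [W_zero_right]
    rw [W_eq_replicate_append hq.ne', List.map_append, List.sum_append,
      ih _ (Nat.mod_lt p hq), List.map_replicate, List.sum_replicate, smul_eq_mul]
    calc p / q * q ^ 2 + q * (p % q) = (q * (p / q) + p % q) * q := by ring
      _ = p * q := by rw [Nat.div_add_mod]

/-- for all positive integers `p ≥ q ≥ 1`, the sum of the squares of the
entries of the label sequence `W(p,q)` equals `p·q` (equivalently, for `a = p/q` in lowest
terms the weight expansion `w(a) = (1/q)·W(p,q)` satisfies `Σ wᵢ² = a`). -/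
theorem weight_expansion_sum_sq (p q : ℕ) (hq : 1 ≤ q) (hqp : q ≤ p) :
    ((W p q).map (fun m => m^2)).sum = p * q :=
  weight_expansion_sum_sq_general p q
end

section
/- Let a = p/q ≥ 9 be rational in lowest terms with weight expansion w(a) = (w_1, …, w_M) (so that 0 < w_i ≤ 1 for all i). Then for every positive integer d and all nonnegative integers m_1, …, m_M with Σ_i m_i = 3d − 1, one has Σ_i m_i·w_i ≤ d·√a. (This is Biran's argument showing that for a ≥ 9 there is no obstruction beyond the volume bound.) -/
/-! Every weight is at most `1`, so `Σ mᵢ wᵢ ≤ Σ mᵢ = 3d - 1 < 3d`, and `3 ≤ √a` once `a ≥ 9`. -/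

theorem le_of_mem_W {p q x : ℕ} (hx : x ∈ W p q) : x ≤ q := by
  induction p, q using W.induct with
  | case1 p => simp [W] at hx
  | case2 p q hq hdvd =>
    rw [W, dif_neg hq, if_pos hdvd] at hx
    exact (List.eq_of_mem_replicate hx).le
  | case3 p q hq hdvd ih =>
    rw [W, dif_neg hq, if_neg hdvd] at hx
    rcases List.mem_append.mp hx with h | h
    · exact (List.eq_of_mem_replicate h).le
    · exact (ih h).trans (Nat.mod_lt p (Nat.pos_of_ne_zero hq)).le

theorem W_get_div_le_one (p q : ℕ) (i : Fin (W p q).length) : ((W p q).get i : ℝ) / q ≤ 1 :=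
  div_le_one_of_le₀ (by exact_mod_cast le_of_mem_W (List.get_mem _ i)) q.cast_nonneg

theorem sum_mul_le_sum_of_le_one {ι : Type*} (s : Finset ι) (m w : ι → ℝ)
    (hm : ∀ i ∈ s, 0 ≤ m i) (hw : ∀ i ∈ s, w i ≤ 1) : ∑ i ∈ s, m i * w i ≤ ∑ i ∈ s, m i :=
  Finset.sum_le_sum fun i hi => mul_le_of_le_one_right (hm i hi) (hw i hi)

theorem three_le_sqrt_div {p q : ℕ} (hq : 0 < q) (h9 : 9 * q ≤ p) :
    (3 : ℝ) ≤ Real.sqrt ((p : ℝ) / q) := by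
  rw [Real.le_sqrt (by norm_num) (by positivity), le_div_iff₀ (by exact_mod_cast hq)]
  exact_mod_cast (by omega : 3 ^ 2 * q ≤ p)

theorem no_obstruction_above_nine_general (p q : ℕ) (hq : 0 < q)
    (h9 : 9 * q ≤ p) (d : ℕ)
    (m : Fin (W p q).length → ℕ) (hsum : ∑ i, m i = 3 * d - 1) :
    ∑ i, (m i : ℝ) * (((W p q).get i : ℝ) / q) ≤ (d : ℝ) * Real.sqrt ((p : ℝ)/q) := by
  have hmass : ∑ i, (m i : ℝ) ≤ 3 * d := by
    rw [← Nat.cast_sum, hsum]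
    exact_mod_cast Nat.sub_le (3 * d) 1
  calc ∑ i, (m i : ℝ) * (((W p q).get i : ℝ) / q)
      ≤ ∑ i, (m i : ℝ) :=
        sum_mul_le_sum_of_le_one _ _ _ (fun i _ => (m i).cast_nonneg)
          (fun i _ => W_get_div_le_one p q i)
    _ ≤ d * 3 := by linarith
    _ ≤ d * Real.sqrt ((p : ℝ) / q) := by gcongr; exact three_le_sqrt_div hq h9

/-- Biran's argument: for rational `a = p/q ≥ 9` in lowest terms with weight
expansion `w(a) = (1/q)·W(p,q)`, for every positive integer `d` and all nonnegative integers
`m₁, …, m_M` with `Σ mᵢ = 3d − 1`, one has `Σ mᵢ·wᵢ ≤ d·√a`. -/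
theorem no_obstruction_above_nine (p q : ℕ) (hq : 0 < q) (hcop : Nat.Coprime p q)
    (h9 : 9 * q ≤ p) (d : ℕ) (hd : 0 < d)
    (m : Fin (W p q).length → ℕ) (hsum : ∑ i, m i = 3 * d - 1) :
    ∑ i, (m i : ℝ) * (((W p q).get i : ℝ) / q) ≤ (d : ℝ) * Real.sqrt ((p : ℝ)/q) :=
  no_obstruction_above_nine_general p q hq h9 d m hsum
end
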